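/- Let K = 2 and S = [[1−a, a],[b, 1−b]] with a + b < 1. Suppose there exist allele-frequency vectors p_{·,m1} = (1, p_{2,m1}) with p_{2,m1} < 1 and p_{·,m2} = (p_{1,m2}, 1) with p_{1,m2} < 1 such that S^{−1}p_{·,m} ∈ [0,1]² for m = m1, m2, and suppose there exist ancestry vectors q_{i1,·} = (1,0) and q_{i2,·} = (0,1) such that q_{i,·}S ∈ S² for i = i1, i2. Then a = 0 and b = 0, i.e., S is the identity matrix. -/
import Mathlib


/-- Uniqueness criterion for `K = 2`: if `S = [[1−a,a],[b,1−b]]` with `a + b < 1` maps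
the allele-frequency vectors `(1, p₂)` (with `p₂ < 1`) and `(p₁, 1)` (with `p₁ < 1`) under
`S⁻¹` into `[0,1]²`, and the ancestry vectors `(1,0)` and `(0,1)` under right multiplication
by `S` into the simplex, then `a = 0` and `b = 0`, i.e. `S` is the identity. -/
theorem unique_mle_K2 (a b p2m1 p1m2 : ℝ)
    (hab : a + b < 1)
    (hp2 : p2m1 ∈ Set.Icc (0:ℝ) 1) (hp2lt : p2m1 < 1)
    (hp1 : p1m2 ∈ Set.Icc (0:ℝ) 1) (hp1lt : p1m2 < 1)
    -- S⁻¹ (1, p2m1)ᵀ ∈ [0,1]²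
    (h1 : (1 * (1 - b) + p2m1 * (-a)) / (1 - a - b) ∈ Set.Icc (0:ℝ) 1)
    (h2 : (1 * (-b) + p2m1 * (1 - a)) / (1 - a - b) ∈ Set.Icc (0:ℝ) 1)
    -- S⁻¹ (p1m2, 1)ᵀ ∈ [0,1]²
    (h3 : (p1m2 * (1 - b) + 1 * (-a)) / (1 - a - b) ∈ Set.Icc (0:ℝ) 1)
    (h4 : (p1m2 * (-b) + 1 * (1 - a)) / (1 - a - b) ∈ Set.Icc (0:ℝ) 1)
    -- (1,0)·S = (1−a, a) ∈ S² and (0,1)·S = (b, 1−b) ∈ S²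
    (hq1 : ![1 - a, a] ∈ stdSimplex ℝ (Fin 2))
    (hq2 : ![b, 1 - b] ∈ stdSimplex ℝ (Fin 2)) :
    a = 0 ∧ b = 0 := by
  have ha : 0 ≤ a := by simpa using hq1.1 1
  have hb : 0 ≤ b := by simpa using hq2.1 0
  have hd : 0 < 1 - a - b := by linarith
  have h1' := (div_le_one hd).1 h1.2
  have h4' := (div_le_one hd).1 h4.2
  constructor <;> nlinarith [hp2.2, hp1.2]
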